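/- arXiv:0812.2311 — 8 statements merged into one kernel-verified Lean document; each statement's English description precedes it below -/
import Mathlib

section
/- Let H be a complex Hilbert space, x, y ∈ H, and A a bounded operator on H such that for every λ ∈ ℂ the operator xx* + |λ|² yy* + λA + conj(λ)A* has rank at most 1. If x and y are linearly independent, then A = μ xy* or A = μ yx* for some μ ∈ ℂ with |μ| = 1. -/
/-!
Every 2×2 minor `⟪s, T u⟫⟪t, T w⟫ - ⟪s, T w⟫⟪t, T u⟫` of an operator `T` of rank at most one
vanishes. For `T = xx* + |λ|² yy* + λA + λ̄A*` such a minor is a polynomial in `λ` and `λ̄`, so each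
of its coefficients vanishes. The `λ²` coefficient is a minor of `A`, hence `A = ξη*`. The
coefficients of `λ` and `λ²λ̄` are the mixed minors of `A` with `xx*` and with `yy*`; for rank-one
operators these factor, and they vanish only if `ξ` or `η` lies on `ℂx`, and `ξ` or `η` lies on
`ℂy`. As `x, y` are independent, `A = μ xy*` or `A = μ yx*`. Finally, at `(s, t, s, t)` the `|λ|²`
coefficient is `(1 - |μ|²) |⟪x, s⟫⟪y, t⟫ - ⟪x, t⟫⟪y, s⟫|²`, and independence of `x, y` gives `s, t`
for which the last factor is nonzero, so `|μ| = 1`.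
-/

/-- `rk1 ξ η` is the rank-one operator `ξη* : τ ↦ ⟨η, τ⟩ ξ`. -/
noncomputable def rk1 {H : Type*} [NormedAddCommGroup H] [InnerProductSpace ℂ H]
    (ξ η : H) : H →L[ℂ] H := (innerSL ℂ η).smulRight ξ

open scoped InnerProductSpace ComplexConjugate
open InnerProductSpace ContinuousLinearMap

lemma Complex.coeff_eq_zero_of_forall_conj_poly_eq_zero (c₁₀ c₀₁ c₂₀ c₁₁ c₀₂ c₂₁ c₁₂ : ℂ)
    (h : ∀ l : ℂ, c₁₀ * l + c₀₁ * conj l + c₂₀ * l ^ 2 + c₁₁ * (l * conj l) + c₀₂ * conj l ^ 2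
      + c₂₁ * (l ^ 2 * conj l) + c₁₂ * (l * conj l ^ 2) = 0) :
    c₁₀ = 0 ∧ c₂₀ = 0 ∧ c₁₁ = 0 ∧ c₂₁ = 0 := by
  -- Split into odd and even parts in `l`, separate degrees 1 and 3 by `l ↦ 2 l`, and separate
  -- `l` from `conj l` by evaluating at `1`, `I` and `1 + I`.
  have hneg := fun l : ℂ => by simpa only [map_neg] using h (-l)
  have hodd : ∀ l : ℂ, c₁₀ * l + c₀₁ * conj l + l * conj l * (c₂₁ * l + c₁₂ * conj l) = 0 :=
    fun l => by linear_combination (h l - hneg l) / 2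
  have heven : ∀ l : ℂ, c₂₀ * l ^ 2 + c₁₁ * (l * conj l) + c₀₂ * conj l ^ 2 = 0 :=
    fun l => by linear_combination (h l + hneg l) / 2
  have hlin : ∀ l : ℂ, c₁₀ * l + c₀₁ * conj l = 0 := fun l => by
    have h2 := hodd (2 * l)
    simp only [map_mul, map_ofNat] at h2
    linear_combination (8 * hodd l - h2) / 6
  have hcub : ∀ l : ℂ, l * conj l * (c₂₁ * l + c₁₂ * conj l) = 0 := fun l => by
    linear_combination hodd l - hlin l
  have h1 := hlin 1
  have hI := hlin Complex.I
  have k1 := hcub 1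
  have kI := hcub Complex.I
  have e1 := heven 1
  have eI := heven Complex.I
  have e1I := heven (1 + Complex.I)
  simp only [map_one, map_add, Complex.conj_I] at h1 hI k1 kI e1 eI e1I
  refine ⟨?_, ?_, ?_, ?_⟩
  · linear_combination (norm := ring_nf) (h1 - Complex.I * hI) / 2
    simp only [Complex.I_sq]; ring
  · linear_combination (norm := ring_nf)
      ((1 + Complex.I) * e1 + (Complex.I - 1) * eI - Complex.I * e1I) / 4
    simp only [Complex.I_sq]; ring
  · linear_combination (norm := ring_nf) (e1 + eI) / 2
    simp only [Complex.I_sq]; ring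
  · linear_combination (norm := ring_nf) (k1 - Complex.I * kI) / 2
    simp only [Complex.I_pow_four]; ring

noncomputable section

variable {H : Type*} [NormedAddCommGroup H] [InnerProductSpace ℂ H]

lemma rk1_eq_rankOne (ξ η : H) : rk1 ξ η = rankOne ℂ ξ η := rfl

-- The 2×2 minors of the matrix `(⟪s, T u⟫)`; they all vanish iff `T` has rank at most one.
def innerMinor (T : H →L[ℂ] H) (s t u w : H) : ℂ :=
  ⟪s, T u⟫_ℂ * ⟪t, T w⟫_ℂ - ⟪s, T w⟫_ℂ * ⟪t, T u⟫_ℂ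

-- The polarization of `innerMinor`:
-- `innerMinor (S + T) = innerMinor S + innerMixedMinor S T + innerMinor T`.
def innerMixedMinor (S T : H →L[ℂ] H) (s t u w : H) : ℂ :=
  ⟪s, S u⟫_ℂ * ⟪t, T w⟫_ℂ + ⟪s, T u⟫_ℂ * ⟪t, S w⟫_ℂ
    - ⟪s, S w⟫_ℂ * ⟪t, T u⟫_ℂ - ⟪s, T w⟫_ℂ * ⟪t, S u⟫_ℂ

def innerWedge (a c s t : H) : ℂ :=
  ⟪a, s⟫_ℂ * ⟪c, t⟫_ℂ - ⟪a, t⟫_ℂ * ⟪c, s⟫_ℂ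

lemma innerWedge_swap (a c s t : H) : innerWedge c a s t = -innerWedge a c s t := by
  simp only [innerWedge]
  ring

lemma innerMinor_eq_zero_of_rank_le_one {T : H →L[ℂ] H}
    (hT : LinearMap.rank (T : H →ₗ[ℂ] H) ≤ 1) (s t u w : H) : innerMinor T s t u w = 0 := by
  obtain ⟨v, hv⟩ := rank_le_one_iff.mp hT
  obtain ⟨a, ha⟩ := hv ⟨T u, LinearMap.mem_range_self _ u⟩
  obtain ⟨b, hb⟩ := hv ⟨T w, LinearMap.mem_range_self _ w⟩
  have hu : T u = a • (v : H) := by simpa using (congrArg Subtype.val ha).symm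
  have hw : T w = b • (v : H) := by simpa using (congrArg Subtype.val hb).symm
  simp only [innerMinor, hu, hw, inner_smul_right]
  ring

lemma innerMinor_rankOne (a b s t u w : H) : innerMinor (rankOne ℂ a b) s t u w = 0 := by
  simp only [innerMinor, rankOne_apply, inner_smul_right]
  ring

lemma innerMixedMinor_rankOne_rankOne (a b c d s t u w : H) :
    innerMixedMinor (rankOne ℂ a b) (rankOne ℂ c d) s t u w
      = conj (innerWedge a c s t) * innerWedge b d u w := by
  simp only [innerMixedMinor, innerWedge, rankOne_apply, inner_smul_right, map_sub, map_mul,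
    inner_conj_symm]
  ring

lemma innerMixedMinor_smul_smul (S T : H →L[ℂ] H) (a b : ℂ) (s t u w : H) :
    innerMixedMinor (a • S) (b • T) s t u w = a * b * innerMixedMinor S T s t u w := by
  simp only [innerMixedMinor, smul_apply, inner_smul_right]
  ring

lemma exists_innerWedge_ne_zero {a c : H} (ha : a ≠ 0) (hc : c ∉ ℂ ∙ a) :
    ∃ s t, innerWedge a c s t ≠ 0 := by
  by_contra! h
  simp only [innerWedge] at h
  refine hc (Submodule.mem_span_singleton.mpr ⟨conj (⟪c, a⟫_ℂ / ⟪a, a⟫_ℂ), ?_⟩)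
  have haa : ⟪a, a⟫_ℂ ≠ 0 := inner_self_ne_zero.mpr ha
  refine ext_inner_right ℂ fun t => ?_
  rw [inner_smul_left, Complex.conj_conj, div_mul_eq_mul_div, div_eq_iff haa]
  linear_combination -h a t

lemma mem_span_singleton_or_of_innerMixedMinor_eq_zero {a ξ η : H} (ha : a ≠ 0)
    (h : ∀ s t u w, innerMixedMinor (rankOne ℂ a a) (rankOne ℂ ξ η) s t u w = 0) :
    ξ ∈ ℂ ∙ a ∨ η ∈ ℂ ∙ a := by
  by_contra! ⟨hξ, hη⟩
  obtain ⟨s, t, hst⟩ := exists_innerWedge_ne_zero ha hξ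
  obtain ⟨u, w, huw⟩ := exists_innerWedge_ne_zero ha hη
  have := h s t u w
  rw [innerMixedMinor_rankOne_rankOne] at this
  exact mul_ne_zero ((map_ne_zero _).mpr hst) huw this

lemma innerMinor_and_innerMixedMinor_eq_zero_of_pencil {P R A C : H →L[ℂ] H} {s t u w : H}
    (hP : innerMinor P s t u w = 0) (hR : innerMinor R s t u w = 0)
    (h : ∀ l : ℂ, innerMinor (P + (‖l‖ ^ 2 : ℂ) • R + l • A + conj l • C) s t u w = 0) :
    innerMinor A s t u w = 0 ∧ innerMixedMinor P A s t u w = 0 ∧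
      innerMixedMinor P R s t u w + innerMixedMinor A C s t u w = 0 ∧
      innerMixedMinor R A s t u w = 0 := by
  obtain ⟨hPA, hA, hPRAC, hRA⟩ := Complex.coeff_eq_zero_of_forall_conj_poly_eq_zero
    (innerMixedMinor P A s t u w) (innerMixedMinor P C s t u w) (innerMinor A s t u w)
    (innerMixedMinor P R s t u w + innerMixedMinor A C s t u w) (innerMinor C s t u w)
    (innerMixedMinor R A s t u w) (innerMixedMinor R C s t u w) fun l => by
      have hl := h l
      rw [← Complex.mul_conj'] at hl
      simp only [innerMinor, innerMixedMinor, add_apply, smul_apply, inner_add_right,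
        inner_smul_right] at hl hP hR ⊢
      linear_combination hl - hP - (l * conj l) ^ 2 * hR
  exact ⟨hA, hPA, hPRAC, hRA⟩

lemma eq_zero_of_mem_span_singleton_of_mem_span_singleton {x y v : H}
    (hxy : LinearIndependent ℂ ![x, y]) (hx : v ∈ ℂ ∙ x) (hy : v ∈ ℂ ∙ y) : v = 0 := by
  obtain ⟨a, rfl⟩ := Submodule.mem_span_singleton.mp hx
  obtain ⟨b, hb⟩ := Submodule.mem_span_singleton.mp hy
  have ha := (LinearIndependent.pair_iff.mp hxy a (-b) (by rw [neg_smul, hb, add_neg_cancel])).1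
  rw [ha, zero_smul]

lemma exists_rankOne_eq_smul_rankOne {x y ξ η : H} (hxy : LinearIndependent ℂ ![x, y])
    (hx : ξ ∈ ℂ ∙ x ∨ η ∈ ℂ ∙ x) (hy : ξ ∈ ℂ ∙ y ∨ η ∈ ℂ ∙ y) :
    ∃ μ : ℂ, rankOne ℂ ξ η = μ • rankOne ℂ x y ∨ rankOne ℂ ξ η = μ • rankOne ℂ y x := by
  rcases hx with hξx | hηx <;> rcases hy with hξy | hηy
  · refine ⟨0, Or.inl ?_⟩
    simp [eq_zero_of_mem_span_singleton_of_mem_span_singleton hxy hξx hξy]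
  · obtain ⟨a, rfl⟩ := Submodule.mem_span_singleton.mp hξx
    obtain ⟨b, rfl⟩ := Submodule.mem_span_singleton.mp hηy
    exact ⟨a * conj b, Or.inl (by simp [smul_smul])⟩
  · obtain ⟨a, rfl⟩ := Submodule.mem_span_singleton.mp hξy
    obtain ⟨b, rfl⟩ := Submodule.mem_span_singleton.mp hηx
    exact ⟨a * conj b, Or.inr (by simp [smul_smul])⟩
  · refine ⟨0, Or.inl ?_⟩
    simp [eq_zero_of_mem_span_singleton_of_mem_span_singleton hxy hηx hηy]

variable [CompleteSpace H]

lemma exists_eq_rankOne_of_innerMinor_eq_zero {A : H →L[ℂ] H}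
    (h : ∀ s t u w, innerMinor A s t u w = 0) : ∃ ξ η : H, A = rankOne ℂ ξ η := by
  by_cases hA : A = 0
  · exact ⟨0, 0, by simp [hA]⟩
  obtain ⟨u₀, hu₀⟩ : ∃ u₀, A u₀ ≠ 0 := by
    by_contra! h₀
    exact hA (ext h₀)
  have hn : ⟪A u₀, A u₀⟫_ℂ ≠ 0 := inner_self_ne_zero.mpr hu₀
  simp only [innerMinor] at h
  refine ⟨(⟪A u₀, A u₀⟫_ℂ)⁻¹ • A u₀, adjoint A (A u₀), ext fun w => ?_⟩
  have hw : ⟪A u₀, A u₀⟫_ℂ • A w = ⟪A u₀, A w⟫_ℂ • A u₀ :=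
    ext_inner_left ℂ fun s => by
      simp only [inner_smul_right]
      linear_combination -h s (A u₀) u₀ w
  rw [rankOne_apply, adjoint_inner_left, smul_smul, mul_comm, ← smul_smul, ← hw,
    inv_smul_smul₀ hn]

lemma norm_eq_one_of_innerMixedMinor_adjoint {x y : H} {A : H →L[ℂ] H} {μ : ℂ}
    (hxy : LinearIndependent ℂ ![x, y])
    (hA : A = μ • rankOne ℂ x y ∨ A = μ • rankOne ℂ y x)
    (h : ∀ s t u w, innerMixedMinor (rankOne ℂ x x) (rankOne ℂ y y) s t u w
      + innerMixedMinor A (adjoint A) s t u w = 0) :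
    ‖μ‖ = 1 := by
  have hx : x ≠ 0 := by simpa using hxy.ne_zero 0
  have hy : y ∉ ℂ ∙ x := fun hy => by
    obtain ⟨a, ha⟩ := Submodule.mem_span_singleton.mp hy
    exact (LinearIndependent.pair_iff' hx).mp hxy a ha
  obtain ⟨s, t, hst⟩ := exists_innerWedge_ne_zero hx hy
  have hW : conj (innerWedge x y s t) * innerWedge x y s t ≠ 0 :=
    mul_ne_zero ((map_ne_zero _).mpr hst) hst
  have key : (1 - μ * conj μ) * (conj (innerWedge x y s t) * innerWedge x y s t) = 0 := by
    have := h s t s t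
    rcases hA with rfl | rfl <;>
    · simp only [map_smulₛₗ, adjoint_rankOne, innerMixedMinor_smul_smul,
        innerMixedMinor_rankOne_rankOne, innerWedge_swap x y, map_neg] at this
      linear_combination this
  rw [Complex.mul_conj'] at key
  have : (‖μ‖ : ℂ) ^ 2 = 1 := by linear_combination -(mul_eq_zero.mp key).resolve_right hW
  exact (pow_eq_one_iff_of_nonneg (norm_nonneg μ) two_ne_zero).mp (by exact_mod_cast this)

end

theorem stmt2 {H : Type*} [NormedAddCommGroup H] [InnerProductSpace ℂ H] [CompleteSpace H]
    (x y : H) (A : H →L[ℂ] H)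
    (h : ∀ l : ℂ, LinearMap.rank
      (((rk1 x x + (‖l‖ ^ 2 : ℂ) • rk1 y y + l • A +
        (starRingEnd ℂ l) • ContinuousLinearMap.adjoint A) : H →L[ℂ] H) : H →ₗ[ℂ] H) ≤ 1)
    (hxy : LinearIndependent ℂ ![x, y]) :
    ∃ μ : ℂ, ‖μ‖ = 1 ∧ (A = μ • rk1 x y ∨ A = μ • rk1 y x) := by
  simp only [rk1_eq_rankOne] at h ⊢
  have hpencil s t u w := innerMinor_and_innerMixedMinor_eq_zero_of_pencil
    (innerMinor_rankOne x x s t u w) (innerMinor_rankOne y y s t u w)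
    fun l => innerMinor_eq_zero_of_rank_le_one (h l) s t u w
  simp only [forall_and] at hpencil
  obtain ⟨hA, hxA, hxyA, hyA⟩ := hpencil
  obtain ⟨ξ, η, rfl⟩ := exists_eq_rankOne_of_innerMinor_eq_zero hA
  obtain ⟨μ, hμ⟩ := exists_rankOne_eq_smul_rankOne hxy
    (mem_span_singleton_or_of_innerMixedMinor_eq_zero (by simpa using hxy.ne_zero 0) hxA)
    (mem_span_singleton_or_of_innerMixedMinor_eq_zero (by simpa using hxy.ne_zero 1) hyA)
  exact ⟨μ, norm_eq_one_of_innerMixedMinor_adjoint hxy hμ hxyA, hμ⟩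
end

section
/- Let H be a complex Hilbert space, x ∈ H a nonzero vector, and A a bounded operator on H such that for every λ ∈ ℂ the operator xx* + |λ|² yy* + λA + conj(λ)A* has rank at most 1, where y = γx for some γ ∈ ℂ. Then A = μ xx* for some μ ∈ ℂ. -/
/-!
Write the operator of the hypothesis as `k l • x x* + S l`, where `S l = l A + (l A)*` is
self-adjoint and odd in `l`, and `k l = 1 + |l|² |γ|²` is even and nonzero. For `u ⊥ x`, the
2×2 minor of a rank ≤ 1 operator with rows `u, x` and columns `w, x`, written for `l` and `-l`,
splits into an even and an odd part:
`⟪u, S w⟫ ⟪x, x⟫ = ⟪u, S x⟫ ⟪x, w⟫` and `⟪u, S w⟫ ⟪x, S x⟫ = ⟪u, S x⟫ ⟪x, S w⟫`.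
Taking `w = u` in both, self-adjointness turns the second into `|⟪u, S x⟫|² = 0`, and then the
first gives `⟪u, S l w⟫ = 0` for all `w`. From `l = 1` and `l = i` this holds for `A` and `A*`, so
both map `H` into `ℂ x`; hence `A` kills `x^⊥` and `A x ∈ ℂ x`, i.e. `A` is a multiple of `x x*`.
-/

open scoped InnerProductSpace ComplexConjugate

theorem inner_mul_inner_comm_of_rank_le_one {𝕜 V F : Type*} [RCLike 𝕜] [AddCommGroup V]
    [Module 𝕜 V] [NormedAddCommGroup F] [InnerProductSpace 𝕜 F] {T : V →ₗ[𝕜] F}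
    (hT : T.rank ≤ 1) (u u' : F) (v v' : V) :
    ⟪u, T v⟫_𝕜 * ⟪u', T v'⟫_𝕜 = ⟪u, T v'⟫_𝕜 * ⟪u', T v⟫_𝕜 := by
  obtain ⟨w, hw⟩ := rank_le_one_iff.mp hT
  obtain ⟨a, ha⟩ := hw ⟨T v, LinearMap.mem_range_self T v⟩
  obtain ⟨b, hb⟩ := hw ⟨T v', LinearMap.mem_range_self T v'⟩
  have hv : T v = a • (w : F) := (congrArg Subtype.val ha).symm
  have hv' : T v' = b • (w : F) := (congrArg Subtype.val hb).symm
  rw [hv, hv', inner_smul_right, inner_smul_right, inner_smul_right, inner_smul_right]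
  ring

section

variable {H : Type*} [NormedAddCommGroup H] [InnerProductSpace ℂ H]

@[simp]
theorem rk1_apply (ξ η τ : H) : rk1 ξ η τ = ⟪η, τ⟫_ℂ • ξ := rfl

theorem rk1_smul_smul (a b : ℂ) (ξ η : H) : rk1 (a • ξ) (b • η) = (a * conj b) • rk1 ξ η := by
  ext τ
  simp only [rk1_apply, inner_smul_left, smul_apply, smul_smul]
  ring_nf

theorem inner_sub_div_inner_self_smul (x v : H) (hx : x ≠ 0) :
    ⟪x, v - (⟪x, v⟫_ℂ / ⟪x, x⟫_ℂ) • x⟫_ℂ = 0 := by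
  rw [inner_sub_right, inner_smul_right, div_mul_cancel₀ _ (inner_self_ne_zero.mpr hx), sub_self]

theorem inner_minor_eq_of_rank_smul_rk1_add_le_one {x u : H} (hu : ⟪x, u⟫_ℂ = 0) {k : ℂ}
    {S : H →L[ℂ] H} (hT : ((k • rk1 x x + S : H →L[ℂ] H) : H →ₗ[ℂ] H).rank ≤ 1) (w : H) :
    ⟪u, S w⟫_ℂ * (k * ⟪x, x⟫_ℂ ^ 2 + ⟪x, S x⟫_ℂ)
      = ⟪u, S x⟫_ℂ * (k * ⟪x, x⟫_ℂ * ⟪x, w⟫_ℂ + ⟪x, S w⟫_ℂ) := by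
  have hu' : ⟪u, x⟫_ℂ = 0 := inner_eq_zero_symm.mp hu
  have := inner_mul_inner_comm_of_rank_le_one hT u x w x
  simp only [ContinuousLinearMap.toLinearMap_add, ContinuousLinearMap.toLinearMap_smul,
    LinearMap.add_apply, LinearMap.smul_apply, ContinuousLinearMap.coe_coe, rk1_apply,
    inner_add_right, inner_smul_right, hu'] at this
  linear_combination this

theorem inner_apply_eq_zero_of_rank_smul_rk1_add_sub_le_one {x : H} (hx : x ≠ 0) {k : ℂ}
    (hk : k ≠ 0) {S : H →L[ℂ] H} (hS : (S : H →ₗ[ℂ] H).IsSymmetric)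
    (hpos : ((k • rk1 x x + S : H →L[ℂ] H) : H →ₗ[ℂ] H).rank ≤ 1)
    (hneg : ((k • rk1 x x - S : H →L[ℂ] H) : H →ₗ[ℂ] H).rank ≤ 1)
    {u : H} (hu : ⟪x, u⟫_ℂ = 0) (w : H) : ⟪u, S w⟫_ℂ = 0 := by
  rw [sub_eq_add_neg] at hneg
  have hc : ⟪x, x⟫_ℂ ≠ 0 := inner_self_ne_zero.mpr hx
  have hplus := inner_minor_eq_of_rank_smul_rk1_add_le_one hu hpos
  have hminus := inner_minor_eq_of_rank_smul_rk1_add_le_one hu hneg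
  simp only [neg_apply, inner_neg_right] at hminus
  have heven : ∀ w, ⟪u, S w⟫_ℂ * ⟪x, x⟫_ℂ = ⟪u, S x⟫_ℂ * ⟪x, w⟫_ℂ := fun w =>
    mul_left_cancel₀ (mul_ne_zero (mul_ne_zero two_ne_zero hk) hc) <| by
      linear_combination hplus w - hminus w
  have hodd : ∀ w, ⟪u, S w⟫_ℂ * ⟪x, S x⟫_ℂ = ⟪u, S x⟫_ℂ * ⟪x, S w⟫_ℂ := fun w =>
    mul_left_cancel₀ (two_ne_zero (α := ℂ)) <| by linear_combination hplus w + hminus w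
  have hSuu : ⟪u, S u⟫_ℂ = 0 := by simpa [hu, hx] using heven u
  have hSux : ⟪u, S x⟫_ℂ = 0 := by
    have := hodd u
    have hsym : ⟪x, S u⟫_ℂ = conj ⟪u, S x⟫_ℂ := by rw [inner_conj_symm]; exact (hS x u).symm
    rw [hSuu, zero_mul, hsym, Complex.mul_conj] at this
    simpa using this.symm
  simpa [hSux, hx] using heven w

theorem eq_smul_rk1_of_inner_apply_eq_zero {x : H} (hx : x ≠ 0) {A : H →L[ℂ] H}
    (hA : ∀ u, ⟪x, u⟫_ℂ = 0 → ∀ w, ⟪u, A w⟫_ℂ = 0) (hA' : ∀ u, ⟪x, u⟫_ℂ = 0 → A u = 0) :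
    A = (⟪x, A x⟫_ℂ / ⟪x, x⟫_ℂ ^ 2) • rk1 x x := by
  have hc : ⟪x, x⟫_ℂ ≠ 0 := inner_self_ne_zero.mpr hx
  have hAx : A x = (⟪x, A x⟫_ℂ / ⟪x, x⟫_ℂ) • x := by
    set z := A x - (⟪x, A x⟫_ℂ / ⟪x, x⟫_ℂ) • x
    have hz : ⟪x, z⟫_ℂ = 0 := inner_sub_div_inner_self_smul x (A x) hx
    have : ⟪z, z⟫_ℂ = 0 := by
      rw [inner_sub_right, inner_smul_right, hA z hz, inner_eq_zero_symm.mp hz, mul_zero, sub_zero]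
    exact sub_eq_zero.mp (inner_self_eq_zero.mp this)
  ext v
  have hv := hA' _ (inner_sub_div_inner_self_smul x v hx)
  rw [map_sub, map_smul, sub_eq_zero, hAx, smul_smul] at hv
  rw [hv, smul_apply, rk1_apply, smul_smul]
  congr 1
  field_simp

theorem inner_apply_eq_zero_of_forall_inner_smul_add_star [CompleteSpace H] {A : H →L[ℂ] H}
    {u w : H} (h : ∀ l : ℂ, ⟪u, (l • A + star (l • A)) w⟫_ℂ = 0) :
    ⟪u, A w⟫_ℂ = 0 ∧ ⟪A u, w⟫_ℂ = 0 := by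
  have h1 := h 1
  have hI := h Complex.I
  simp only [star_smul, ContinuousLinearMap.star_eq_adjoint, add_apply, smul_apply,
    inner_add_right, inner_smul_right, ContinuousLinearMap.adjoint_inner_right, one_smul,
    Complex.star_def, Complex.conj_I] at h1 hI
  constructor
  · linear_combination (h1 - Complex.I * hI + (⟪u, A w⟫_ℂ - ⟪A u, w⟫_ℂ) * Complex.I_sq) / 2
  · linear_combination (h1 + Complex.I * hI + (⟪A u, w⟫_ℂ - ⟪u, A w⟫_ℂ) * Complex.I_sq) / 2

end

theorem stmt3 {H : Type*} [NormedAddCommGroup H] [InnerProductSpace ℂ H] [CompleteSpace H]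
    (x : H) (hx : x ≠ 0) (γ : ℂ) (y : H) (hy : y = γ • x) (A : H →L[ℂ] H)
    (h : ∀ l : ℂ, LinearMap.rank
      (((rk1 x x + (‖l‖ ^ 2 : ℂ) • rk1 y y + l • A +
        (starRingEnd ℂ l) • ContinuousLinearMap.adjoint A) : H →L[ℂ] H) : H →ₗ[ℂ] H) ≤ 1) :
    ∃ μ : ℂ, A = μ • rk1 x x := by
  set k : ℂ → ℂ := fun l => ((1 + ‖l‖ ^ 2 * ‖γ‖ ^ 2 : ℝ) : ℂ)
  have hT : ∀ l : ℂ, rk1 x x + (‖l‖ ^ 2 : ℂ) • rk1 y y + l • A +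
      (starRingEnd ℂ l) • ContinuousLinearMap.adjoint A =
        k l • rk1 x x + (l • A + star (l • A)) := by
    intro l
    rw [hy, rk1_smul_smul, Complex.mul_conj', star_smul, ContinuousLinearMap.star_eq_adjoint]
    simp only [k, Complex.star_def]
    push_cast
    module
  have hS : ∀ l : ℂ, ∀ u, ⟪x, u⟫_ℂ = 0 → ∀ w, ⟪u, (l • A + star (l • A)) w⟫_ℂ = 0 := by
    intro l u hu
    have hpos := h l
    have hneg := h (-l)
    rw [hT] at hpos hneg
    have hk : k (-l) = k l := by simp only [k, norm_neg]
    rw [hk, neg_smul, star_neg, ← neg_add, ← sub_eq_add_neg] at hneg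
    exact inner_apply_eq_zero_of_rank_smul_rk1_add_sub_le_one hx
      (Complex.ofReal_ne_zero.mpr (by positivity)) (IsSelfAdjoint.add_star_self _).isSymmetric
      hpos hneg hu
  have hA u (hu : ⟪x, u⟫_ℂ = 0) w :=
    inner_apply_eq_zero_of_forall_inner_smul_add_star fun l => hS l u hu w
  exact ⟨_, eq_smul_rk1_of_inner_apply_eq_zero hx (fun u hu w => (hA u hu w).1)
    (fun u hu => inner_self_eq_zero.mp (hA u hu (A u)).2)⟩
end

section
/- Let K, H be finite-dimensional complex Hilbert spaces and φ : B(K) → B(H) a positive linear map such that rank φ(P) ≤ 1 for every one-dimensional orthogonal projection P on K. Then rank φ(X) ≤ 1 for every X ∈ B(K) with rank X ≤ 1. -/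
open Matrix ComplexOrder

/-- A linear map between matrix algebras is positive if it maps positive
semidefinite matrices to positive semidefinite matrices. -/
def PosMap {n m : ℕ} (φ : Matrix (Fin n) (Fin n) ℂ →ₗ[ℂ] Matrix (Fin m) (Fin m) ℂ) : Prop :=
  ∀ X : Matrix (Fin n) (Fin n) ℂ, X.PosSemidef → (φ X).PosSemidef

/-- `P` is a one-dimensional orthogonal projection. -/
def IsProj1 {n : ℕ} (P : Matrix (Fin n) (Fin n) ℂ) : Prop :=
  P.IsHermitian ∧ P * P = P ∧ P.rank = 1

/-- The ampliation `id ⊗ φ` applied blockwise to a `k × k` block matrix. -/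
def amp {n m : ℕ} (k : ℕ) (φ : Matrix (Fin n) (Fin n) ℂ →ₗ[ℂ] Matrix (Fin m) (Fin m) ℂ)
    (M : Matrix (Fin k × Fin n) (Fin k × Fin n) ℂ) : Matrix (Fin k × Fin m) (Fin k × Fin m) ℂ :=
  Matrix.of fun p q => φ (Matrix.of fun a b => M (p.1, a) (q.1, b)) p.2 q.2

/-- Complete positivity: all ampliations preserve positive semidefiniteness. -/
def CompletelyPositive {n m : ℕ}
    (φ : Matrix (Fin n) (Fin n) ℂ →ₗ[ℂ] Matrix (Fin m) (Fin m) ℂ) : Prop :=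
  ∀ (k : ℕ) (M : Matrix (Fin k × Fin n) (Fin k × Fin n) ℂ),
    M.PosSemidef → (amp k φ M).PosSemidef

/-- Complete copositivity: `X ↦ φ(Xᵀ)` is completely positive. -/
def CompletelyCopositive {n m : ℕ}
    (φ : Matrix (Fin n) (Fin n) ℂ →ₗ[ℂ] Matrix (Fin m) (Fin m) ℂ) : Prop :=
  ∀ (k : ℕ) (M : Matrix (Fin k × Fin n) (Fin k × Fin n) ℂ), M.PosSemidef →
    (Matrix.of fun p q : Fin k × Fin m =>
      φ (Matrix.of fun a b => M (p.1, b) (q.1, a)) p.2 q.2).PosSemidef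

/-- `φ` is extremal in the cone of positive maps. -/
def IsExtremalPos {n m : ℕ}
    (φ : Matrix (Fin n) (Fin n) ℂ →ₗ[ℂ] Matrix (Fin m) (Fin m) ℂ) : Prop :=
  PosMap φ ∧ ∀ ψ, PosMap ψ → PosMap (φ - ψ) → ∃ l : ℝ, 0 ≤ l ∧ ψ = (l : ℂ) • φ

/-- `φ` is decomposable: a sum of a completely positive and a completely
copositive map. -/
def Decomposable {n m : ℕ}
    (φ : Matrix (Fin n) (Fin n) ℂ →ₗ[ℂ] Matrix (Fin m) (Fin m) ℂ) : Prop :=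
  ∃ φ₁ φ₂, CompletelyPositive φ₁ ∧ CompletelyCopositive φ₂ ∧ φ = φ₁ + φ₂



lemma aux_star_single {p : ℕ} (i : Fin p) (a : ℂ) :
    star (Pi.single i a : Fin p → ℂ) = Pi.single i (star a) := by
  funext k
  simp [Pi.single_apply, apply_ite (star : ℂ → ℂ)]

lemma aux_vmv_mulVec {p q : ℕ} (a : Fin p → ℂ) (b : Fin q → ℂ) (x : Fin q → ℂ) :
    vecMulVec a b *ᵥ x = (b ⬝ᵥ x) • a := by
  funext i
  simp only [mulVec, dotProduct, vecMulVec_apply, Pi.smul_apply, smul_eq_mul]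
  rw [Finset.sum_mul]
  exact Finset.sum_congr rfl fun l _ => by ring

lemma aux_eq_zero_of_quad {p : ℕ} (M : Matrix (Fin p) (Fin p) ℂ)
    (h : ∀ x : Fin p → ℂ, star x ⬝ᵥ M *ᵥ x = 0) : M = 0 := by
  have pair : ∀ (i j : Fin p) (a b : ℂ),
      star (Pi.single i a + Pi.single j b) ⬝ᵥ M *ᵥ (Pi.single i a + Pi.single j b)
        = star a * M i i * a + star a * M i j * b + star b * M j i * a + star b * M j j * b := by
    intro i j a b
    rw [star_add, aux_star_single, aux_star_single]
    simp only [mulVec_add, dotProduct_add, add_dotProduct, single_dotProduct,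
      mulVec, dotProduct_single]
    ring
  have hd : ∀ i, M i i = 0 := by
    intro i
    have h0 := h (Pi.single i 1 + Pi.single i 0)
    rw [pair] at h0
    simpa using h0
  ext i j
  by_cases hij : i = j
  · subst hij; simpa using hd i
  · have h1 := h (Pi.single i 1 + Pi.single j 1)
    have h2 := h (Pi.single i 1 + Pi.single j Complex.I)
    rw [pair] at h1 h2
    simp only [star_one, Complex.star_def, Complex.conj_I, one_mul, mul_one] at h1 h2
    simp only [Matrix.zero_apply]
    linear_combination (1/2 : ℂ) * h1 - (Complex.I/2) * h2
      - ((1 - Complex.I)/2) * hd i - ((1 - Complex.I)/2) * hd j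
      + ((M i j - M j i)/2 - (Complex.I/2) * M j j) * Complex.I_mul_I

lemma aux_rank_vmv {p q : ℕ} (a : Fin p → ℂ) (b : Fin q → ℂ) :
    (vecMulVec a b).rank ≤ 1 := by
  rw [vecMulVec_eq (Fin 1)]
  exact (rank_mul_le_left _ _).trans ((rank_le_card_width _).trans (by simp))

lemma aux_rank_smul_le {p q : ℕ} (c : ℂ) (M : Matrix (Fin p) (Fin q) ℂ) :
    (c • M).rank ≤ M.rank := by
  have h : c • M = M * (c • (1 : Matrix (Fin q) (Fin q) ℂ)) := by
    rw [Matrix.mul_smul, Matrix.mul_one]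
  rw [h]
  exact rank_mul_le_left _ _

lemma aux_exists_vmv {p q : ℕ} (M : Matrix (Fin p) (Fin q) ℂ) (h : M.rank ≤ 1) :
    ∃ u v, M = vecMulVec u v := by
  rw [Matrix.rank] at h
  obtain ⟨v₀, hv₀⟩ := finrank_le_one_iff.mp h
  choose c hc using fun j : Fin q =>
    hv₀ ⟨M *ᵥ Pi.single j 1, ⟨Pi.single j 1, by simp [mulVecLin_apply]⟩⟩
  refine ⟨(v₀ : Fin p → ℂ), c, ?_⟩
  ext i j
  have h1 := congrArg (fun w : ↥(LinearMap.range M.mulVecLin) => (w : Fin p → ℂ) i) (hc j)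
  simp only [SetLike.val_smul, Pi.smul_apply, smul_eq_mul] at h1
  rw [vecMulVec_apply, mul_comm, h1]
  simp [mulVec, dotProduct_single]



lemma keyScalar (a₀ a₁ a₂ a₃ b₀ b₁ b₂ b₃ c₀ c₁ c₂ c₃ d₀ d₁ d₂ d₃ : ℂ)
    (h : ∀ t s : ℂ, s = star t →
      (a₀ + s * a₁ + t * a₂ + t * s * a₃) * (b₀ + s * b₁ + t * b₂ + t * s * b₃)
        = (c₀ + s * c₁ + t * c₂ + t * s * c₃) * (d₀ + s * d₁ + t * d₂ + t * s * d₃)) :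
    a₁ * b₁ = c₁ * d₁ := by
  have sI : (star Complex.I : ℂ) = -Complex.I := by
    simp [Complex.star_def, Complex.conj_I]
  have h1 := h 1 1 (by simp)
  have h2 := h (-1) (-1) (by simp)
  have h3 := h Complex.I (-Complex.I) (by rw [sI])
  have h4 := h (-Complex.I) Complex.I (by rw [star_neg, sI, neg_neg])
  have h5 := h (1 + Complex.I) (1 - Complex.I) (by rw [star_add, star_one, sI]; ring)
  have h6 := h (1 - Complex.I) (1 + Complex.I) (by rw [star_sub, star_one, sI]; ring)
  have h7 := h (-1 + Complex.I) (-1 - Complex.I) (by rw [star_add, star_neg, star_one, sI]; ring)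
  have h8 := h (-1 - Complex.I) (-1 + Complex.I) (by rw [star_sub, star_neg, star_one, sI]; ring)
  linear_combination (1/8 : ℂ) * h1 + (1/8 : ℂ) * h2 - (1/8 : ℂ) * h3 - (1/8 : ℂ) * h4
    + (Complex.I/16) * h5 - (Complex.I/16) * h6 - (Complex.I/16) * h7 + (Complex.I/16) * h8
    + ((1/4 : ℂ) * (c₃*d₃) + (1/4 : ℂ) * (c₃*d₀) + (1/4 : ℂ) * (c₂*d₂) + (1/4 : ℂ) * (c₂*d₁)
      + (1/4 : ℂ) * (c₁*d₂) - (3/4 : ℂ) * (c₁*d₁) + (1/4 : ℂ) * (c₀*d₃)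
      - (1/4 : ℂ) * (a₃*b₃) - (1/4 : ℂ) * (a₃*b₀) - (1/4 : ℂ) * (a₂*b₂) - (1/4 : ℂ) * (a₂*b₁)
      - (1/4 : ℂ) * (a₁*b₂) + (3/4 : ℂ) * (a₁*b₁) - (1/4 : ℂ) * (a₀*b₃)
      - (1/4 : ℂ) * (Complex.I*Complex.I*(c₃*d₃))
      + (1/4 : ℂ) * (Complex.I*Complex.I*(a₃*b₃))) * Complex.I_mul_I

lemma aux_rank_of_ident {p : ℕ} (C : Matrix (Fin p) (Fin p) ℂ)
    (h : ∀ x y : Fin p → ℂ,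
      (star x ⬝ᵥ C *ᵥ x) * (star y ⬝ᵥ C *ᵥ y) = (star x ⬝ᵥ C *ᵥ y) * (star y ⬝ᵥ C *ᵥ x)) :
    C.rank ≤ 1 := by
  by_cases hq : ∀ x, star x ⬝ᵥ C *ᵥ x = 0
  · rw [aux_eq_zero_of_quad C hq]
    simp [Matrix.rank_zero]
  · push_neg at hq
    obtain ⟨x₀, hx₀⟩ := hq
    have hD : C - (star x₀ ⬝ᵥ C *ᵥ x₀)⁻¹ • vecMulVec (C *ᵥ x₀) (star x₀ ᵥ* C) = 0 := by
      apply aux_eq_zero_of_quad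
      intro y
      rw [Matrix.sub_mulVec, dotProduct_sub, Matrix.smul_mulVec, aux_vmv_mulVec]
      simp only [dotProduct_smul, smul_eq_mul]
      rw [← dotProduct_mulVec]
      have h2 := h x₀ y
      field_simp
      linear_combination h2
    have hC : C = (star x₀ ⬝ᵥ C *ᵥ x₀)⁻¹ • vecMulVec (C *ᵥ x₀) (star x₀ ᵥ* C) := by
      rw [← sub_eq_zero]; exact hD
    rw [hC]
    exact (aux_rank_smul_le _ _).trans (aux_rank_vmv _ _)

lemma aux_phi_rank_one {n m : ℕ}
    (φ : Matrix (Fin n) (Fin n) ℂ →ₗ[ℂ] Matrix (Fin m) (Fin m) ℂ)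
    (hrk : ∀ P : Matrix (Fin n) (Fin n) ℂ, IsProj1 P → (φ P).rank ≤ 1)
    (z : Fin n → ℂ) : (φ (vecMulVec z (star z))).rank ≤ 1 := by
  by_cases hz : z = 0
  · subst hz
    have h0 : vecMulVec (0 : Fin n → ℂ) (star (0 : Fin n → ℂ)) = 0 := by
      ext i j; simp [vecMulVec_apply]
    rw [h0, map_zero]
    simp [Matrix.rank_zero]
  · have hc0 : (star z ⬝ᵥ z : ℂ) ≠ 0 := fun h => hz (dotProduct_star_self_eq_zero.mp h)
    have hcs : star (star z ⬝ᵥ z : ℂ) = star z ⬝ᵥ z := (star_dotProduct z z).symm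
    have hNN : vecMulVec z (star z) * vecMulVec z (star z)
        = (star z ⬝ᵥ z : ℂ) • vecMulVec z (star z) := by
      ext i j
      simp only [Matrix.mul_apply, vecMulVec_apply, Matrix.smul_apply, smul_eq_mul,
        Pi.star_apply, dotProduct]
      rw [Finset.sum_mul]
      exact Finset.sum_congr rfl fun k _ => by ring
    set P := (star z ⬝ᵥ z : ℂ)⁻¹ • vecMulVec z (star z) with hP
    have hPP : IsProj1 P := by
      refine ⟨?_, ?_, ?_⟩
      · show Pᴴ = P
        rw [hP, Matrix.conjTranspose_smul, star_inv₀, hcs]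
        congr 1
        ext i j
        simp only [Matrix.conjTranspose_apply, vecMulVec_apply, Pi.star_apply, star_mul',
          star_star]
        exact mul_comm _ _
      · rw [hP, Matrix.smul_mul, Matrix.mul_smul, hNN, smul_smul, smul_smul,
          mul_assoc, inv_mul_cancel₀ hc0, mul_one]
      · refine le_antisymm ((aux_rank_smul_le _ _).trans (aux_rank_vmv _ _)) ?_
        have hzmem : z ∈ LinearMap.range P.mulVecLin := by
          refine ⟨z, ?_⟩
          rw [mulVecLin_apply, hP, Matrix.smul_mulVec, aux_vmv_mulVec, smul_smul,
            inv_mul_cancel₀ hc0, one_smul]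
        rw [Matrix.rank]
        haveI : Nontrivial ↥(LinearMap.range P.mulVecLin) :=
          ⟨⟨z, hzmem⟩, 0, fun hcon => hz (congrArg Subtype.val hcon)⟩
        exact Module.finrank_pos_iff.mpr this
    have hsc : vecMulVec z (star z) = (star z ⬝ᵥ z : ℂ) • P := by
      rw [hP, smul_smul, mul_inv_cancel₀ hc0, one_smul]
    rw [hsc, _root_.map_smul]
    exact (aux_rank_smul_le _ _).trans (hrk P hPP)


theorem stmt5 {n m : ℕ}
    (φ : Matrix (Fin n) (Fin n) ℂ →ₗ[ℂ] Matrix (Fin m) (Fin m) ℂ)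
    (hpos : PosMap φ)
    (hrk : ∀ P : Matrix (Fin n) (Fin n) ℂ, IsProj1 P → (φ P).rank ≤ 1) :
    ∀ X : Matrix (Fin n) (Fin n) ℂ, X.rank ≤ 1 → (φ X).rank ≤ 1 := by
  intro X hX
  obtain ⟨u, w, rfl⟩ := aux_exists_vmv X hX
  set v : Fin n → ℂ := star w with hv
  have hw : star v = w := by funext k; simp [hv]
  have hexp : ∀ t : ℂ, φ (vecMulVec (u + t • v) (star (u + t • v)))
      = φ (vecMulVec u (star u)) + star t • φ (vecMulVec u w)
        + t • φ (vecMulVec v (star u)) + (t * star t) • φ (vecMulVec v (star v)) := by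
    intro t
    have hm : vecMulVec (u + t • v) (star (u + t • v))
        = vecMulVec u (star u) + star t • vecMulVec u w
          + t • vecMulVec v (star u) + (t * star t) • vecMulVec v (star v) := by
      ext i j
      simp only [vecMulVec_apply, Matrix.add_apply, Matrix.smul_apply, Pi.add_apply,
        Pi.smul_apply, Pi.star_apply, smul_eq_mul, star_add, star_mul', ← hw]
      ring
    rw [hm, map_add, map_add, map_add, _root_.map_smul, _root_.map_smul, _root_.map_smul]
  have hlin : ∀ (x y : Fin m → ℂ) (t : ℂ),
      star x ⬝ᵥ (φ (vecMulVec (u + t • v) (star (u + t • v)))) *ᵥ y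
        = star x ⬝ᵥ (φ (vecMulVec u (star u))) *ᵥ y
          + star t * (star x ⬝ᵥ (φ (vecMulVec u w)) *ᵥ y)
          + t * (star x ⬝ᵥ (φ (vecMulVec v (star u))) *ᵥ y)
          + t * star t * (star x ⬝ᵥ (φ (vecMulVec v (star v))) *ᵥ y) := by
    intro x y t
    rw [hexp t]
    simp only [Matrix.add_mulVec, Matrix.smul_mulVec, dotProduct_add, dotProduct_smul,
      smul_eq_mul]
  apply aux_rank_of_ident
  intro x y
  refine keyScalar
    (star x ⬝ᵥ (φ (vecMulVec u (star u))) *ᵥ x) (star x ⬝ᵥ (φ (vecMulVec u w)) *ᵥ x)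
    (star x ⬝ᵥ (φ (vecMulVec v (star u))) *ᵥ x) (star x ⬝ᵥ (φ (vecMulVec v (star v))) *ᵥ x)
    (star y ⬝ᵥ (φ (vecMulVec u (star u))) *ᵥ y) (star y ⬝ᵥ (φ (vecMulVec u w)) *ᵥ y)
    (star y ⬝ᵥ (φ (vecMulVec v (star u))) *ᵥ y) (star y ⬝ᵥ (φ (vecMulVec v (star v))) *ᵥ y)
    (star x ⬝ᵥ (φ (vecMulVec u (star u))) *ᵥ y) (star x ⬝ᵥ (φ (vecMulVec u w)) *ᵥ y)
    (star x ⬝ᵥ (φ (vecMulVec v (star u))) *ᵥ y) (star x ⬝ᵥ (φ (vecMulVec v (star v))) *ᵥ y)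
    (star y ⬝ᵥ (φ (vecMulVec u (star u))) *ᵥ x) (star y ⬝ᵥ (φ (vecMulVec u w)) *ᵥ x)
    (star y ⬝ᵥ (φ (vecMulVec v (star u))) *ᵥ x) (star y ⬝ᵥ (φ (vecMulVec v (star v))) *ᵥ x)
    ?_
  intro t s hst
  subst hst
  obtain ⟨pp, rr, hpr⟩ := aux_exists_vmv _ (aux_phi_rank_one φ hrk (u + t • v))
  have e1 := hlin x x t
  have e2 := hlin y y t
  have e3 := hlin x y t
  have e4 := hlin y x t
  rw [hpr, aux_vmv_mulVec, dotProduct_smul, smul_eq_mul] at e1 e2 e3 e4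
  rw [← e1, ← e2, ← e3, ← e4]
  ring
end

section
/- Let K, H be finite-dimensional complex Hilbert spaces and φ : B(K) → B(H) a positive linear map with φ(X) = B₁ X B₂ for all X ∈ B(K), where B₁ ∈ B(K,H), B₂ ∈ B(H,K), and B₁ ≠ 0. Then there exists B ∈ B(K,H) such that φ(X) = B X B* for all X ∈ B(K). -/
open Matrix ComplexOrder

/-
A positive map commutes with `ᴴ`, since matrices are spanned by positive ones. For
`φ X = B₁ X B₂` this says `B₁ Y B₂ = B₂ᴴ Y B₁ᴴ` for all `Y`; testing on matrix units at a
nonzero entry of `B₁` gives `B₂ = μ B₁ᴴ`, and positivity of `φ 1 = μ B₁ B₁ᴴ ≠ 0` gives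
`μ ≥ 0`, so `B = √μ B₁` works.
-/

-- The operator norm makes matrices a C⋆-algebra, which is spanned by its positive elements.
open scoped Matrix.Norms.L2Operator MatrixOrder in
theorem PosMap.map_conjTranspose {n m : ℕ}
    {φ : Matrix (Fin n) (Fin n) ℂ →ₗ[ℂ] Matrix (Fin m) (Fin m) ℂ} (hφ : PosMap φ)
    (X : Matrix (Fin n) (Fin n) ℂ) : φ Xᴴ = (φ X)ᴴ := by
  have hX : X ∈ Submodule.span ℂ {A : Matrix (Fin n) (Fin n) ℂ | 0 ≤ A} :=
    CStarAlgebra.span_nonneg (A := Matrix (Fin n) (Fin n) ℂ) ▸ Submodule.mem_top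
  induction hX using Submodule.span_induction with
  | mem A hA =>
    have hA := nonneg_iff_posSemidef.mp hA
    rw [hA.isHermitian.eq, (hφ A hA).isHermitian.eq]
  | zero => simp
  | add A B _ _ hA hB => simp [hA, hB]
  | smul c A _ hA => simp [hA]

namespace Matrix

theorem mul_single_one_mul_apply {R l m n o : Type*} [Semiring R] [Fintype m] [Fintype n]
    [DecidableEq m] [DecidableEq n]
    (A : Matrix l m R) (B : Matrix n o R) (k : m) (k' : n) (i : l) (j : o) :
    (A * single k k' (1 : R) * B) i j = A i k * B k' j := by
  simp [mul_apply, single, ite_and]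

theorem exists_eq_smul_of_forall_mul_mul_eq {K l m n o : Type*} [Field K]
    [Fintype m] [Fintype n] [DecidableEq m] [DecidableEq n]
    {A C : Matrix l m K} {B D : Matrix n o K} (hA : A ≠ 0)
    (h : ∀ Y : Matrix m n K, A * Y * B = C * Y * D) : ∃ μ : K, B = μ • D := by
  obtain ⟨i, k, hik⟩ : ∃ i k, A i k ≠ 0 := by
    by_contra! h0
    exact hA (Matrix.ext h0)
  refine ⟨C i k / A i k, Matrix.ext fun k' j => ?_⟩
  have := congrFun₂ (h (single k k' 1)) i j
  rw [mul_single_one_mul_apply, mul_single_one_mul_apply] at this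
  rw [smul_apply, smul_eq_mul, div_mul_eq_mul_div, eq_div_iff hik, mul_comm, this]

theorem PosSemidef.nonneg_of_smul {n : Type*} [Fintype n] {P : Matrix n n ℂ}
    (hP : P.PosSemidef) (hP0 : P ≠ 0) {μ : ℂ} (hμP : (μ • P).PosSemidef) : 0 ≤ μ := by
  have htr : 0 < P.trace := hP.trace_nonneg.lt_of_ne' (mt hP.trace_eq_zero_iff.mp hP0)
  have hμtr : 0 ≤ μ * P.trace := by simpa [trace_smul] using hμP.trace_nonneg
  simpa [htr.ne'] using mul_nonneg hμtr (inv_nonneg.mpr htr.le)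

theorem exists_smul_mul_mul_conjTranspose_eq {m n : Type*} [Fintype n] {μ : ℂ} (hμ : 0 ≤ μ)
    (A : Matrix m n ℂ) :
    ∃ B : Matrix m n ℂ, ∀ X : Matrix n n ℂ, μ • (A * X * Aᴴ) = B * X * Bᴴ := by
  obtain ⟨r, hr, rfl⟩ := RCLike.nonneg_iff_exists_ofReal.mp hμ
  refine ⟨(√r : ℂ) • A, fun X => ?_⟩
  simp [conjTranspose_smul, smul_mul, smul_smul, Real.mul_self_sqrt hr]

end Matrix

theorem stmt7 {n m : ℕ}
    (φ : Matrix (Fin n) (Fin n) ℂ →ₗ[ℂ] Matrix (Fin m) (Fin m) ℂ)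
    (hpos : PosMap φ)
    (B₁ : Matrix (Fin m) (Fin n) ℂ) (B₂ : Matrix (Fin n) (Fin m) ℂ)
    (hB₁ : B₁ ≠ 0)
    (hφ : ∀ X, φ X = B₁ * X * B₂) :
    ∃ B : Matrix (Fin m) (Fin n) ℂ, ∀ X, φ X = B * X * Bᴴ := by
  obtain ⟨μ, hB₂⟩ := exists_eq_smul_of_forall_mul_mul_eq hB₁ (C := B₂ᴴ) (D := B₁ᴴ) fun Y => by
    rw [← hφ, ← conjTranspose_conjTranspose Y, hpos.map_conjTranspose, hφ]
    simp [Matrix.mul_assoc]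
  have hφ' : ∀ X, φ X = μ • (B₁ * X * B₁ᴴ) := by simp [hφ, hB₂]
  have hμ : 0 ≤ μ := (posSemidef_self_mul_conjTranspose B₁).nonneg_of_smul
    (mt self_mul_conjTranspose_eq_zero.mp hB₁) (by simpa [hφ'] using hpos 1 .one)
  obtain ⟨B, hB⟩ := exists_smul_mul_mul_conjTranspose_eq hμ B₁
  exact ⟨B, fun X => (hφ' X).trans (hB X)⟩
end

section
/- Let K, H be finite-dimensional complex Hilbert spaces and φ : B(K) → B(H) an extremal element of the cone of positive linear maps. If φ is completely positive, then there exists A ∈ B(K,H) such that φ(X) = A X A* for all X ∈ B(K). -/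
open Matrix ComplexOrder

/-!
By Choi's theorem, a completely positive `φ` is a sum of conjugations `X ↦ Aᵣ X Aᵣᴴ`, each of
which is positive and leaves a positive remainder. Extremality makes every `X ↦ Aᵣ X Aᵣᴴ` a
multiple `lᵣ • φ`; if some `lᵣ > 0`, rescaling `Aᵣ` by `lᵣ^(-1/2)` gives `φ`, and otherwise
`φ = ∑ᵣ lᵣ • φ = 0` is conjugation by `0`.

Choi's theorem itself: the Choi matrix `[φ(Eᵢⱼ)]ᵢⱼ` is `id ⊗ φ` applied to the rank-one projection
onto `vec 1`, hence positive semidefinite, hence a sum of `v vᴴ`; the Choi matrix of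
`X ↦ A X Aᴴ` is `vec A (vec A)ᴴ`, and a map is determined by its Choi matrix.
-/

section ConjMap

variable {ι κ : Type*} [Fintype ι]

noncomputable def conjMap (A : Matrix κ ι ℂ) : Matrix ι ι ℂ →ₗ[ℂ] Matrix κ κ ℂ where
  toFun X := A * X * Aᴴ
  map_add' X Y := by rw [Matrix.mul_add, Matrix.add_mul]
  map_smul' c X := by rw [Matrix.mul_smul, Matrix.smul_mul]; rfl

lemma conjMap_apply (A : Matrix κ ι ℂ) (X : Matrix ι ι ℂ) : conjMap A X = A * X * Aᴴ := rfl

lemma conjMap_ofReal_smul (t : ℝ) (A : Matrix κ ι ℂ) :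
    conjMap ((t : ℂ) • A) = ((t ^ 2 : ℝ) : ℂ) • conjMap A := by
  ext1 X
  simp only [conjMap_apply, LinearMap.smul_apply, conjTranspose_smul, Complex.star_def,
    Complex.conj_ofReal, Matrix.smul_mul, Matrix.mul_smul, smul_smul, Complex.ofReal_mul, sq]

end ConjMap

section Positivity

variable {n m : ℕ}

lemma posMap_conjMap (A : Matrix (Fin m) (Fin n) ℂ) : PosMap (conjMap A) :=
  fun _ hX => hX.mul_mul_conjTranspose_same A

lemma posMap_sum_conjMap {ρ : Type*} (s : Finset ρ) (A : ρ → Matrix (Fin m) (Fin n) ℂ) :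
    PosMap (∑ r ∈ s, conjMap (A r)) := fun X hX => by
  rw [LinearMap.sum_apply]
  exact posSemidef_sum s fun r _ => posMap_conjMap (A r) X hX

end Positivity

section Choi

variable {ι κ : Type*} [DecidableEq ι]

def choiMatrix (φ : Matrix ι ι ℂ →ₗ[ℂ] Matrix κ κ ℂ) : Matrix (ι × κ) (ι × κ) ℂ :=
  of fun p q => φ (single p.1 q.1 1) p.2 q.2

lemma apply_eq_sum_choiMatrix [Fintype ι] (φ : Matrix ι ι ℂ →ₗ[ℂ] Matrix κ κ ℂ)
    (X : Matrix ι ι ℂ) (p q : κ) : φ X p q = ∑ i, ∑ j, X i j * choiMatrix φ (i, p) (j, q) := by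
  conv_lhs => rw [matrix_eq_sum_single X]
  simp only [map_sum, Matrix.sum_apply, choiMatrix, of_apply]
  refine Finset.sum_congr rfl fun i _ => Finset.sum_congr rfl fun j _ => ?_
  have hsingle : single i j (X i j) = X i j • single i j 1 := by
    rw [smul_single, smul_eq_mul, mul_one]
  rw [hsingle, _root_.map_smul, Matrix.smul_apply, smul_eq_mul]

lemma choiMatrix_injective [Fintype ι] : Function.Injective (choiMatrix (ι := ι) (κ := κ)) :=
  fun φ ψ h => LinearMap.ext fun X => Matrix.ext fun p q => by
    rw [apply_eq_sum_choiMatrix φ, apply_eq_sum_choiMatrix ψ, h]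

lemma choiMatrix_sum {ρ : Type*} (s : Finset ρ) (φ : ρ → Matrix ι ι ℂ →ₗ[ℂ] Matrix κ κ ℂ) :
    choiMatrix (∑ r ∈ s, φ r) = ∑ r ∈ s, choiMatrix (φ r) := by
  ext p q
  simp only [choiMatrix, of_apply, LinearMap.sum_apply, Matrix.sum_apply]

lemma choiMatrix_conjMap [Fintype ι] [Fintype κ] (A : Matrix κ ι ℂ) :
    choiMatrix (conjMap A) = vecMulVec (vec A) (star (vec A)) := by
  ext p q
  simp [choiMatrix, conjMap_apply, mul_apply, single_apply, vecMulVec_apply, ite_and]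

end Choi

lemma amp_vecMulVec_vec_one {n m : ℕ}
    (φ : Matrix (Fin n) (Fin n) ℂ →ₗ[ℂ] Matrix (Fin m) (Fin m) ℂ) :
    amp n φ (vecMulVec (vec 1) (star (vec 1))) = choiMatrix φ := by
  have hsingle : ∀ i j : Fin n,
      (of fun a b => vecMulVec (vec 1) (star (vec 1)) (i, a) (j, b)) = single i j (1 : ℂ) := by
    intro i j
    ext a b
    simp only [of_apply, vec, vecMulVec_apply, Pi.star_apply, one_apply, single_apply]
    by_cases hia : i = a <;> by_cases hjb : j = b <;> simp [hia, hjb, eq_comm]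
  ext p q
  simp only [amp, choiMatrix, of_apply, hsingle]

namespace CompletelyPositive

variable {n m : ℕ} {φ : Matrix (Fin n) (Fin n) ℂ →ₗ[ℂ] Matrix (Fin m) (Fin m) ℂ}

lemma posSemidef_choiMatrix (hcp : CompletelyPositive φ) : (choiMatrix φ).PosSemidef :=
  amp_vecMulVec_vec_one φ ▸ hcp n _ (posSemidef_vecMulVec_self_star _)

lemma exists_eq_sum_conjMap (hcp : CompletelyPositive φ) :
    ∃ (k : ℕ) (A : Fin k → Matrix (Fin m) (Fin n) ℂ), φ = ∑ r, conjMap (A r) := by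
  obtain ⟨k, v, hv⟩ := posSemidef_iff_eq_sum_vecMulVec.mp hcp.posSemidef_choiMatrix
  have hvec : ∀ r, vec (of fun p i => v r (i, p)) = v r := fun r => rfl
  refine ⟨k, fun r => of fun p i => v r (i, p), choiMatrix_injective ?_⟩
  simp only [hv, choiMatrix_sum, choiMatrix_conjMap, hvec]

end CompletelyPositive

theorem stmt10 {n m : ℕ}
    (φ : Matrix (Fin n) (Fin n) ℂ →ₗ[ℂ] Matrix (Fin m) (Fin m) ℂ)
    (hext : IsExtremalPos φ) (hcp : CompletelyPositive φ) :
    ∃ A : Matrix (Fin m) (Fin n) ℂ, ∀ X, φ X = A * X * Aᴴ := by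
  obtain ⟨k, A, hA⟩ := hcp.exists_eq_sum_conjMap
  have hrest : ∀ r, PosMap (φ - conjMap (A r)) := fun r => by
    rw [hA, ← Finset.sum_erase_eq_sub (Finset.mem_univ r)]
    exact posMap_sum_conjMap _ A
  choose l hl0 hl using fun r => hext.2 (conjMap (A r)) (posMap_conjMap (A r)) (hrest r)
  suffices ∃ B, φ = conjMap B from this.imp fun B hB X => by rw [hB, conjMap_apply]
  by_cases hpos : ∃ r, l r ≠ 0
  · obtain ⟨r, hr⟩ := hpos
    refine ⟨(((√(l r))⁻¹ : ℝ) : ℂ) • A r, ?_⟩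
    rw [conjMap_ofReal_smul, inv_pow, Real.sq_sqrt (hl0 r), hl r, smul_smul,
      ← Complex.ofReal_mul, inv_mul_cancel₀ hr, Complex.ofReal_one, one_smul]
  · push Not at hpos
    refine ⟨0, LinearMap.ext fun X => ?_⟩
    rw [hA]
    simp [hl, hpos, conjMap_apply]
end

section
/- Let K, H be finite-dimensional complex Hilbert spaces, φ : B(K) → B(H) an extremal positive map, and suppose rank φ(P) ≥ 2 for some one-dimensional projection P on K. Then φ is not decomposable. -/
open Matrix ComplexOrder

/-!
A completely positive map is a sum of Kraus maps `X ↦ Vᴴ X V`, read off a square root of its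
Choi matrix; a completely copositive map is likewise a sum of maps `X ↦ Vᴴ Xᵀ V`. So a
decomposable `φ` is a finite sum of positive maps, each sending the rank-one `P` to a matrix of
rank at most one. Each summand `ψ` satisfies `φ - ψ ≥ 0`, so extremality makes it a multiple of
`φ`, and a summand that does not vanish at `P` then gives `rank (φ P) ≤ 1`.
-/

section Kraus
variable {n m : ℕ}

noncomputable def kraus (V : Matrix (Fin n) (Fin m) ℂ) :
    Matrix (Fin n) (Fin n) ℂ →ₗ[ℂ] Matrix (Fin m) (Fin m) ℂ where
  toFun X := Vᴴ * X * V
  map_add' X Y := by simp only [Matrix.mul_add, Matrix.add_mul]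
  map_smul' c X := by simp only [Matrix.mul_smul, Matrix.smul_mul, RingHom.id_apply]

theorem kraus_apply (V : Matrix (Fin n) (Fin m) ℂ) (X : Matrix (Fin n) (Fin n) ℂ) :
    kraus V X = Vᴴ * X * V := rfl

theorem posMap_kraus (V : Matrix (Fin n) (Fin m) ℂ) : PosMap (kraus V) :=
  fun _ hX => hX.conjTranspose_mul_mul_same V

theorem rank_kraus_apply_le (V : Matrix (Fin n) (Fin m) ℂ) (X : Matrix (Fin n) (Fin n) ℂ) :
    (kraus V X).rank ≤ X.rank := by
  rw [kraus_apply, Matrix.mul_assoc]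
  calc (Vᴴ * (X * V)).rank ≤ (X * V).rank := rank_mul_le_right _ _
    _ ≤ X.rank := rank_mul_le_left _ _

theorem kraus_single_one_apply (V : Matrix (Fin n) (Fin m) ℂ) (i j : Fin n) (p q : Fin m) :
    kraus V (single i j 1) p q = star (V i p) * V j q := by
  simp [kraus_apply, mul_apply, single_apply, conjTranspose_apply, ite_and]

theorem PosMap.sum {ι : Type*} (s : Finset ι)
    {ψ : ι → Matrix (Fin n) (Fin n) ℂ →ₗ[ℂ] Matrix (Fin m) (Fin m) ℂ}
    (hψ : ∀ k ∈ s, PosMap (ψ k)) : PosMap (∑ k ∈ s, ψ k) := fun X hX => by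
  rw [LinearMap.sum_apply]
  exact Finset.sum_induction _ _ (fun _ _ => .add) .zero fun k hk => hψ k hk X hX

theorem PosMap.comp_transpose {φ : Matrix (Fin n) (Fin n) ℂ →ₗ[ℂ] Matrix (Fin m) (Fin m) ℂ}
    (hφ : PosMap φ) : PosMap (φ ∘ₗ (transposeLinearEquiv (Fin n) (Fin n) ℂ ℂ).toLinearMap) :=
  fun X hX => hφ Xᵀ hX.transpose

theorem CompletelyPositive.exists_kraus
    {φ : Matrix (Fin n) (Fin n) ℂ →ₗ[ℂ] Matrix (Fin m) (Fin m) ℂ} (hφ : CompletelyPositive φ) :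
    ∃ V : Fin n × Fin m → Matrix (Fin n) (Fin m) ℂ, φ = ∑ k, kraus (V k) := by
  -- `vecMulVec Ω (star Ω) = ∑ i j, single i j 1 ⊗ single i j 1`, whose ampliation is the Choi matrix
  set Ω : Fin n × Fin n → ℂ := fun a => (1 : Matrix (Fin n) (Fin n) ℂ) a.1 a.2
  have hchoi : ∀ i j p q, amp n φ (vecMulVec Ω (star Ω)) (i, p) (j, q) = φ (single i j 1) p q := by
    intro i j p q
    have hΩ : (of fun a b => Ω (i, a) * star Ω (j, b)) = single i j 1 := by
      ext a b
      simp [Ω, one_apply, single_apply, ← ite_and, and_comm]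
    exact congrFun (congrFun (congrArg φ hΩ) p) q
  open MatrixOrder in
  obtain ⟨B, hB⟩ := CStarAlgebra.nonneg_iff_eq_star_mul_self.mp
    (hφ n _ (posSemidef_vecMulVec_self_star Ω)).nonneg
  refine ⟨fun k => of fun i p => B k (i, p), ext_linearMap ℂ fun i j => LinearMap.ext_ring ?_⟩
  ext p q
  simp only [LinearMap.comp_apply, singleLinearMap_apply, LinearMap.sum_apply, Matrix.sum_apply,
    kraus_single_one_apply, ← hchoi, hB]
  simp [mul_apply, star_eq_conjTranspose]

theorem CompletelyCopositive.exists_kraus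
    {φ : Matrix (Fin n) (Fin n) ℂ →ₗ[ℂ] Matrix (Fin m) (Fin m) ℂ} (hφ : CompletelyCopositive φ) :
    ∃ V : Fin n × Fin m → Matrix (Fin n) (Fin m) ℂ,
      φ = ∑ k, kraus (V k) ∘ₗ (transposeLinearEquiv (Fin n) (Fin n) ℂ ℂ).toLinearMap := by
  -- the ampliations of `φ ∘ transpose` are literally the maps in `hφ`
  obtain ⟨V, hV⟩ := CompletelyPositive.exists_kraus
    (φ := φ ∘ₗ (transposeLinearEquiv (Fin n) (Fin n) ℂ ℂ).toLinearMap) hφ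
  refine ⟨V, LinearMap.ext fun X => ?_⟩
  simpa [LinearMap.sum_apply] using congrArg (· Xᵀ) hV

theorem IsExtremalPos.exists_eq_smul_of_eq_sum {ι : Type*} [Fintype ι]
    {φ : Matrix (Fin n) (Fin n) ℂ →ₗ[ℂ] Matrix (Fin m) (Fin m) ℂ} (hφ : IsExtremalPos φ)
    {ψ : ι → Matrix (Fin n) (Fin n) ℂ →ₗ[ℂ] Matrix (Fin m) (Fin m) ℂ}
    (hψ : ∀ k, PosMap (ψ k)) (hsum : φ = ∑ k, ψ k) (k : ι) :
    ∃ l : ℝ, 0 ≤ l ∧ ψ k = (l : ℂ) • φ := by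
  classical
  refine hφ.2 (ψ k) (hψ k) ?_
  rw [hsum, ← Finset.add_sum_erase _ _ (Finset.mem_univ k), add_sub_cancel_left]
  exact PosMap.sum _ fun j _ => hψ j

theorem IsExtremalPos.rank_apply_le_of_eq_sum {ι : Type*} [Fintype ι]
    {φ : Matrix (Fin n) (Fin n) ℂ →ₗ[ℂ] Matrix (Fin m) (Fin m) ℂ} (hφ : IsExtremalPos φ)
    {ψ : ι → Matrix (Fin n) (Fin n) ℂ →ₗ[ℂ] Matrix (Fin m) (Fin m) ℂ}
    (hψ : ∀ k, PosMap (ψ k)) (hsum : φ = ∑ k, ψ k) (X : Matrix (Fin n) (Fin n) ℂ) {r : ℕ}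
    (hr : ∀ k, (ψ k X).rank ≤ r) : (φ X).rank ≤ r := by
  by_cases hzero : ∀ k, ψ k X = 0
  · simp [hsum, hzero]
  push Not at hzero
  obtain ⟨k, hk⟩ := hzero
  obtain ⟨l, -, hl⟩ := hφ.exists_eq_smul_of_eq_sum hψ hsum k
  have hl0 : (l : ℂ) ≠ 0 := by
    intro h
    simp [hl, h] at hk
  have hrk := hr k
  rwa [hl, LinearMap.smul_apply,
    rank_smul_of_mem_nonZeroDivisors _ (mem_nonZeroDivisors_of_ne_zero hl0)] at hrk

end Kraus

theorem stmt11 {n m : ℕ}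
    (φ : Matrix (Fin n) (Fin n) ℂ →ₗ[ℂ] Matrix (Fin m) (Fin m) ℂ)
    (hext : IsExtremalPos φ)
    (P : Matrix (Fin n) (Fin n) ℂ) (hP : IsProj1 P) (hrk : 2 ≤ (φ P).rank) :
    ¬ Decomposable φ := by
  rintro ⟨φ₁, φ₂, h₁, h₂, hφ⟩
  obtain ⟨V, rfl⟩ := h₁.exists_kraus
  obtain ⟨W, rfl⟩ := h₂.exists_kraus
  have hPrank : P.rank = 1 := hP.2.2
  have : (φ P).rank ≤ 1 := by
    refine hext.rank_apply_le_of_eq_sum (ψ := Sum.elim (fun k => kraus (V k))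
      (fun k => kraus (W k) ∘ₗ (transposeLinearEquiv (Fin n) (Fin n) ℂ ℂ).toLinearMap))
      ?_ (by simp only [hφ, Fintype.sum_sum_type, Sum.elim_inl, Sum.elim_inr]) P ?_
    · rintro (k | k)
      exacts [posMap_kraus _, (posMap_kraus _).comp_transpose]
    · rintro (k | k)
      · exact (rank_kraus_apply_le _ _).trans hPrank.le
      · rw [Sum.elim_inr, LinearMap.comp_apply, LinearEquiv.coe_coe, transposeLinearEquiv_apply]
        exact (rank_kraus_apply_le _ Pᵀ).trans ((rank_transpose P).trans hPrank).le
  omega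
end

section
/- The Choi map φ : M₃(ℂ) → M₃(ℂ), defined by φ([a_ij]) having diagonal entries (a₁₁+a₃₃, a₂₂+a₁₁, a₃₃+a₂₂) and off-diagonal entries −a_ij, is a positive linear map. -/
/-!
Every positive semidefinite matrix is a sum of rank-one matrices `v vᴴ`, and for these
`xᴴ φ(v vᴴ) x = ∑ᵢ |xᵢ|² (2|vᵢ|² + |vᵢ₋₁|²) - |vᴴ x|²` (indices mod 3). By the triangle
inequality it then suffices to show that the real biquadratic form `∑ᵢ pᵢ² (2uᵢ² + uᵢ₋₁²) - (∑ᵢ pᵢuᵢ)²` is nonnegative. This form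
is not a sum of squares, but after multiplication by `u₀² + u₂²` it becomes a square plus a binary
quadratic form in `p₁, p₂` whose discriminant condition is the AM-GM inequality
`3abc ≤ a²b + b²c + c²a` for `a, b, c = u₀², u₁², u₂²`.
-/

open Matrix ComplexOrder

/-- The Choi map on `M₃(ℂ)`. -/
def choiMap (A : Matrix (Fin 3) (Fin 3) ℂ) : Matrix (Fin 3) (Fin 3) ℂ :=
  !![A 0 0 + A 2 2, -A 0 1, -A 0 2;
     -A 1 0, A 1 1 + A 0 0, -A 1 2;
     -A 2 0, -A 2 1, A 2 2 + A 1 1]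

lemma three_mul_mul_le_cyclic {a b c : ℝ} (ha : 0 ≤ a) (hb : 0 ≤ b) (hc : 0 ≤ c) :
    3 * (a * b * c) ≤ a ^ 2 * b + b ^ 2 * c + c ^ 2 * a := by
  nlinarith [mul_nonneg ha (sq_nonneg (b - c)), mul_nonneg hb (sq_nonneg (c - a)),
    mul_nonneg hc (sq_nonneg (a - b))]

lemma binary_quadratic_nonneg {a b c : ℝ} (ha : 0 ≤ a) (hc : 0 ≤ c) (hdisc : b ^ 2 ≤ a * c)
    (s t : ℝ) : 0 ≤ a * s ^ 2 - 2 * b * s * t + c * t ^ 2 := by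
  rcases ha.eq_or_lt with rfl | ha
  · obtain rfl : b = 0 := by nlinarith [sq_nonneg b]
    nlinarith [mul_nonneg hc (sq_nonneg t)]
  · refine nonneg_of_mul_nonneg_right ?_ ha
    nlinarith [sq_nonneg (a * s - b * t), mul_nonneg (sub_nonneg.2 hdisc) (sq_nonneg t)]

lemma sq_sum_mul_le_choi (p u : Fin 3 → ℝ) :
    (∑ i, p i * u i) ^ 2 ≤ ∑ i, p i ^ 2 * (2 * u i ^ 2 + u (i - 1) ^ 2) := by
  simp only [Fin.sum_univ_three, Fin.reduceSub, Fin.isValue]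
  set w := u 0 ^ 2 + u 2 ^ 2
  rcases (by positivity : 0 ≤ w).eq_or_lt with hw | hw
  · obtain ⟨h0, h2⟩ : u 0 = 0 ∧ u 2 = 0 := by
      constructor <;> nlinarith [sq_nonneg (u 0), sq_nonneg (u 2)]
    rw [h0, h2]
    nlinarith [sq_nonneg (p 1 * u 1 - p 2 * u 1)]
  have hQ : 0 ≤ (u 0 ^ 4 + u 0 ^ 2 * u 2 ^ 2 + u 1 ^ 2 * u 2 ^ 2) * p 1 ^ 2
      - 2 * (u 1 * u 2 * (2 * u 0 ^ 2 + u 2 ^ 2)) * p 1 * p 2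
      + (u 0 ^ 2 * u 1 ^ 2 + u 1 ^ 2 * u 2 ^ 2 + u 2 ^ 4) * p 2 ^ 2 := by
    refine binary_quadratic_nonneg (by positivity) (by positivity) ?_ _ _
    -- the gap `ac - b²` equals `w` times the AM-GM gap
    have hamgm := three_mul_mul_le_cyclic (sq_nonneg (u 0)) (sq_nonneg (u 1)) (sq_nonneg (u 2))
    nlinarith [mul_le_mul_of_nonneg_left hamgm hw.le]
  refine le_of_sub_nonneg (nonneg_of_mul_nonneg_right ?_ hw)
  have hsplit : w * (p 0 ^ 2 * (2 * u 0 ^ 2 + u 2 ^ 2) + p 1 ^ 2 * (2 * u 1 ^ 2 + u 0 ^ 2)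
        + p 2 ^ 2 * (2 * u 2 ^ 2 + u 1 ^ 2) - (p 0 * u 0 + p 1 * u 1 + p 2 * u 2) ^ 2)
      = (w * p 0 - u 0 * u 1 * p 1 - u 0 * u 2 * p 2) ^ 2
        + ((u 0 ^ 4 + u 0 ^ 2 * u 2 ^ 2 + u 1 ^ 2 * u 2 ^ 2) * p 1 ^ 2
          - 2 * (u 1 * u 2 * (2 * u 0 ^ 2 + u 2 ^ 2)) * p 1 * p 2
          + (u 0 ^ 2 * u 1 ^ 2 + u 1 ^ 2 * u 2 ^ 2 + u 2 ^ 4) * p 2 ^ 2) := by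
    ring
  rw [hsplit]
  exact add_nonneg (sq_nonneg _) hQ

lemma choiMap_eq (A : Matrix (Fin 3) (Fin 3) ℂ) :
    choiMap A = diagonal (fun i => 2 * A i i + A (i - 1) (i - 1)) - A := by
  ext i j
  fin_cases i <;> fin_cases j <;> simp [choiMap, show (-1 : Fin 3) = 2 from rfl] <;> ring

lemma isLinearMap_choiMap : IsLinearMap ℂ choiMap where
  map_add A B := by
    ext i j
    simp only [choiMap_eq, Matrix.add_apply, Matrix.sub_apply, diagonal_apply]
    split_ifs <;> ring
  map_smul c A := by
    ext i j
    simp only [choiMap_eq, Matrix.smul_apply, Matrix.sub_apply, diagonal_apply, smul_eq_mul]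
    split_ifs <;> ring

lemma Matrix.IsHermitian.choiMap {A : Matrix (Fin 3) (Fin 3) ℂ} (hA : A.IsHermitian) :
    (choiMap A).IsHermitian := by
  rw [choiMap_eq]
  refine (isHermitian_diagonal_of_self_adjoint _ ?_).sub hA
  ext i
  simp [hA.apply]

lemma dotProduct_choiMap_vecMulVec_mulVec (v x : Fin 3 → ℂ) :
    star x ⬝ᵥ choiMap (vecMulVec v (star v)) *ᵥ x =
      ((∑ i, ‖x i‖ ^ 2 * (2 * ‖v i‖ ^ 2 + ‖v (i - 1)‖ ^ 2) - ‖star v ⬝ᵥ x‖ ^ 2 : ℝ) : ℂ) := by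
  simp only [choiMap_eq, mulVec, dotProduct, diagonal_apply, vecMulVec_apply, Matrix.sub_apply,
    Pi.star_apply, RCLike.star_def, Fin.sum_univ_three, Fin.reduceSub, Fin.isValue, Fin.reduceEq,
    reduceIte, Complex.ofReal_sub, Complex.ofReal_add, Complex.ofReal_mul, Complex.ofReal_pow,
    Complex.ofReal_ofNat, ← Complex.conj_mul', map_add, map_mul, Complex.conj_conj]
  ring

lemma posSemidef_choiMap_vecMulVec (v : Fin 3 → ℂ) :
    (choiMap (vecMulVec v (star v))).PosSemidef := by
  refine .of_dotProduct_mulVec_nonneg (posSemidef_vecMulVec_self_star v).isHermitian.choiMap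
    fun x => ?_
  rw [dotProduct_choiMap_vecMulVec_mulVec, Complex.zero_le_real, sub_nonneg]
  have htriangle : ‖star v ⬝ᵥ x‖ ≤ ∑ i, ‖x i‖ * ‖v i‖ :=
    (norm_sum_le _ _).trans_eq (by simp [mul_comm])
  calc ‖star v ⬝ᵥ x‖ ^ 2 ≤ (∑ i, ‖x i‖ * ‖v i‖) ^ 2 :=
        pow_le_pow_left₀ (norm_nonneg _) htriangle 2
    _ ≤ _ := sq_sum_mul_le_choi _ _

theorem stmt12 :
    IsLinearMap ℂ choiMap ∧
    ∀ A : Matrix (Fin 3) (Fin 3) ℂ, A.PosSemidef → (choiMap A).PosSemidef := by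
  refine ⟨isLinearMap_choiMap, fun A hA => ?_⟩
  obtain ⟨m, v, rfl⟩ := posSemidef_iff_eq_sum_vecMulVec.mp hA
  have hsum := map_sum (IsLinearMap.mk' choiMap isLinearMap_choiMap)
    (fun i => vecMulVec (v i) (star (v i))) Finset.univ
  simp only [IsLinearMap.mk'_apply] at hsum
  rw [hsum]
  exact posSemidef_sum _ fun i _ => posSemidef_choiMap_vecMulVec (v i)
end

section
/- Let K be a complex Hilbert space and μ : K → ℝ a continuous function with μ(ξ) ≥ 0 for all ξ, satisfying the parallelogram identity μ(ξ+η) + μ(ξ−η) = 2μ(ξ) + 2μ(η) and μ(−ξ) = μ(ξ), μ(iξ) = μ(ξ) for all ξ, η ∈ K. Then there exists a bounded positive operator M on K with μ(ξ) = ⟨ξ, Mξ⟩ for all ξ ∈ K. -/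
/-!
Polarizing `μ` gives the real form `Q ξ η = (μ (ξ + η) - μ (ξ - η)) / 4`. The parallelogram law
makes `Q` symmetric and additive in each variable, continuity upgrades additivity to `ℝ`-linearity,
and invariance under `ξ ↦ I • ξ` makes `Q ξ η - I * Q ξ (I • η)` a hermitian sesquilinear form with
diagonal `μ`. Continuity at `0` and homogeneity give `μ ξ ≤ (c ‖ξ‖)²`, so by Cauchy–Schwarz the form
is bounded, and the Riesz representation theorem turns it into the operator `M`.
-/

open Complex ComplexConjugate

def ParallelogramLaw {E : Type*} [AddCommGroup E] (μ : E → ℝ) : Prop :=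
  ∀ x y, μ (x + y) + μ (x - y) = 2 * μ x + 2 * μ y

noncomputable def polarForm {E : Type*} [AddCommGroup E] (μ : E → ℝ) (x y : E) : ℝ :=
  (μ (x + y) - μ (x - y)) / 4

noncomputable def sesqForm {E : Type*} [AddCommGroup E] [Module ℂ E] (μ : E → ℝ) (x y : E) : ℂ :=
  polarForm μ x y - I * polarForm μ x (I • y)

section Algebraic

variable {E : Type*} [AddCommGroup E] {μ : E → ℝ}

theorem polarForm_zero_right (x : E) : polarForm μ x 0 = 0 := by
  simp [polarForm]

theorem polarForm_neg_right (x y : E) : polarForm μ x (-y) = -polarForm μ x y := by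
  rw [polarForm, polarForm, ← sub_eq_add_neg, sub_neg_eq_add]
  ring

theorem polarForm_I_smul_right [Module ℂ E] (hI : ∀ x, μ (I • x) = μ x) (x y : E) :
    polarForm μ x (I • y) = -polarForm μ (I • x) y := by
  have h₁ : μ (x + I • y) = μ (I • x - y) := by
    rw [← hI, smul_add, smul_smul, I_mul_I, neg_one_smul, ← sub_eq_add_neg]
  have h₂ : μ (x - I • y) = μ (I • x + y) := by
    rw [← hI, smul_sub, smul_smul, I_mul_I, neg_one_smul, sub_neg_eq_add]
  rw [polarForm, polarForm, h₁, h₂]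
  ring

namespace ParallelogramLaw

theorem map_zero (h : ParallelogramLaw μ) : μ 0 = 0 := by
  have h00 := h 0 0
  simp only [add_zero, sub_zero] at h00
  linarith

theorem map_neg (h : ParallelogramLaw μ) (x : E) : μ (-x) = μ x := by
  have h0x := h 0 x
  rw [zero_add, zero_sub, h.map_zero] at h0x
  linarith

theorem polarForm_self (h : ParallelogramLaw μ) (x : E) : polarForm μ x x = μ x := by
  have hxx := h x x
  rw [sub_self, h.map_zero] at hxx
  rw [polarForm, sub_self, h.map_zero]
  linarith

theorem polarForm_comm (h : ParallelogramLaw μ) (x y : E) : polarForm μ x y = polarForm μ y x := by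
  rw [polarForm, polarForm, add_comm, ← h.map_neg (x - y), neg_sub]

theorem polarForm_add_add_polarForm_sub (h : ParallelogramLaw μ) (x y z : E) :
    polarForm μ x (y + z) + polarForm μ x (y - z) = 2 * polarForm μ x y := by
  have h₁ := h (x + y) z
  have h₂ := h (x - y) z
  rw [polarForm, polarForm, polarForm, ← add_assoc, ← sub_sub, ← add_sub_assoc,
    show x - (y - z) = x - y + z by abel]
  linarith

theorem polarForm_add_right [Module ℝ E] (h : ParallelogramLaw μ) (x a b : E) :
    polarForm μ x (a + b) = polarForm μ x a + polarForm μ x b := by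
  set u : E := (2 : ℝ)⁻¹ • (a + b)
  set v : E := (2 : ℝ)⁻¹ • (a - b)
  have hsum := h.polarForm_add_add_polarForm_sub x u v
  have hdouble := h.polarForm_add_add_polarForm_sub x u u
  rw [sub_self, polarForm_zero_right, add_zero, show u + u = a + b by module] at hdouble
  rw [show u + v = a by module, show u - v = b by module] at hsum
  linarith

theorem sesqForm_self [Module ℂ E] (h : ParallelogramLaw μ) (hI : ∀ x, μ (I • x) = μ x) (x : E) :
    sesqForm μ x x = μ x := by
  have hx : polarForm μ x (I • x) = 0 := by
    have hanti := polarForm_I_smul_right hI x x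
    rw [h.polarForm_comm (I • x)] at hanti
    linarith
  simp [sesqForm, hx, h.polarForm_self]

theorem conj_sesqForm [Module ℂ E] (h : ParallelogramLaw μ) (hI : ∀ x, μ (I • x) = μ x)
    (x y : E) : conj (sesqForm μ x y) = sesqForm μ y x := by
  simp only [sesqForm, map_sub, map_mul, conj_I, conj_ofReal]
  rw [h.polarForm_comm x y, polarForm_I_smul_right hI y x, h.polarForm_comm (I • y) x]
  push_cast
  ring

theorem sesqForm_add_right [Module ℂ E] (h : ParallelogramLaw μ) (x y z : E) :
    sesqForm μ x (y + z) = sesqForm μ x y + sesqForm μ x z := by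
  simp only [sesqForm, smul_add, h.polarForm_add_right]
  push_cast
  ring

theorem sesqForm_add_left [Module ℂ E] (h : ParallelogramLaw μ) (hI : ∀ x, μ (I • x) = μ x)
    (x y z : E) : sesqForm μ (x + y) z = sesqForm μ x z + sesqForm μ y z := by
  rw [← h.conj_sesqForm hI, h.sesqForm_add_right, map_add, h.conj_sesqForm hI,
    h.conj_sesqForm hI]

end ParallelogramLaw

end Algebraic

namespace ParallelogramLaw

section Topological

variable {E : Type*} [AddCommGroup E] [Module ℝ E] [TopologicalSpace E] [IsTopologicalAddGroup E]
  [ContinuousSMul ℝ E] {μ : E → ℝ}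

theorem polarForm_smul_right (h : ParallelogramLaw μ) (hc : Continuous μ) (x : E) (r : ℝ)
    (y : E) : polarForm μ x (r • y) = r * polarForm μ x y :=
  map_real_smul (AddMonoidHom.mk' (polarForm μ x) (h.polarForm_add_right x))
    (show Continuous fun y => polarForm μ x y by unfold polarForm; fun_prop) r y

theorem map_smul (h : ParallelogramLaw μ) (hc : Continuous μ) (r : ℝ) (x : E) :
    μ (r • x) = r ^ 2 * μ x := by
  rw [← h.polarForm_self, h.polarForm_smul_right hc, h.polarForm_comm, h.polarForm_smul_right hc,
    h.polarForm_self]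
  ring

end Topological

theorem exists_le_mul_norm_sq {E : Type*} [NormedAddCommGroup E] [NormedSpace ℝ E] {μ : E → ℝ}
    (h : ParallelogramLaw μ) (hc : Continuous μ) : ∃ c, 0 ≤ c ∧ ∀ x, μ x ≤ (c * ‖x‖) ^ 2 := by
  obtain ⟨δ, hδ, hsmall⟩ := Metric.continuousAt_iff.mp (hc.continuousAt (x := 0)) 1 one_pos
  refine ⟨2 / δ, by positivity, fun x => ?_⟩
  rcases eq_or_ne x 0 with rfl | hx
  · simp [h.map_zero]
  set s := 2 / δ * ‖x‖
  have hs : 0 < s := by positivity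
  have hy : dist (s⁻¹ • x) 0 < δ := by
    rw [dist_zero_right, norm_smul, norm_inv, Real.norm_of_nonneg hs.le]
    have hδs : δ * s = 2 * ‖x‖ := by simp only [s]; field_simp
    rw [inv_mul_eq_div, div_lt_iff₀ hs, hδs]
    linarith [norm_pos_iff.mpr hx]
  have hμy : μ (s⁻¹ • x) < 1 := by
    have hdist := hsmall hy
    rw [Real.dist_eq, h.map_zero, sub_zero] at hdist
    exact (le_abs_self _).trans_lt hdist
  calc μ x = s ^ 2 * μ (s⁻¹ • x) := by
        rw [h.map_smul hc, ← mul_assoc, ← mul_pow, mul_inv_cancel₀ hs.ne', one_pow, one_mul]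
    _ ≤ s ^ 2 := by nlinarith [sq_nonneg s]

section NormedSpace

variable {E : Type*} [SeminormedAddCommGroup E] [NormedSpace ℂ E] {μ : E → ℝ}

theorem sesqForm_smul_right (h : ParallelogramLaw μ) (hc : Continuous μ) (x : E) (c : ℂ)
    (y : E) : sesqForm μ x (c • y) = c * sesqForm μ x y := by
  have hc_decomp : c • y = c.re • y + c.im • (I • y) := by
    rw [← coe_smul, ← coe_smul, smul_smul, ← add_smul, re_add_im]
  have hI_I : I • I • y = -y := by rw [smul_smul, I_mul_I, neg_one_smul]
  simp only [sesqForm, hc_decomp, smul_add, smul_comm I (_ : ℝ), hI_I, h.polarForm_add_right,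
    h.polarForm_smul_right hc, polarForm_neg_right]
  push_cast
  linear_combination (↑(polarForm μ x y) - I * ↑(polarForm μ x (I • y))) * re_add_im c
    + c.im * ↑(polarForm μ x (I • y)) * I_mul_I

theorem sesqForm_smul_left (h : ParallelogramLaw μ) (hc : Continuous μ)
    (hI : ∀ x, μ (I • x) = μ x) (c : ℂ) (x y : E) :
    sesqForm μ (c • x) y = conj c * sesqForm μ x y := by
  rw [← h.conj_sesqForm hI, h.sesqForm_smul_right hc, map_mul, h.conj_sesqForm hI]

theorem norm_sesqForm_le (h : ParallelogramLaw μ) (hc : Continuous μ)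
    (hI : ∀ x, μ (I • x) = μ x) (hnonneg : ∀ x, 0 ≤ μ x) (x y : E) :
    ‖sesqForm μ x y‖ ≤ √(μ x) * √(μ y) := by
  let core : PreInnerProductSpace.Core ℂ E :=
    { inner := sesqForm μ
      conj_inner_symm := fun x y => h.conj_sesqForm hI y x
      re_inner_nonneg := fun x => by
        simp only [RCLike.re_to_complex, h.sesqForm_self hI, ofReal_re, hnonneg]
      add_left := h.sesqForm_add_left hI
      smul_left := fun x y c => h.sesqForm_smul_left hc hI c x y }
  have hcs : ‖sesqForm μ x y‖ ≤ √(sesqForm μ x x).re * √(sesqForm μ y y).re :=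
    InnerProductSpace.Core.norm_inner_le_norm (c := core) x y
  simpa only [h.sesqForm_self hI, ofReal_re] using hcs

end NormedSpace

theorem exists_continuous_sesqForm {E : Type*} [NormedAddCommGroup E] [NormedSpace ℂ E]
    {μ : E → ℝ} (h : ParallelogramLaw μ) (hc : Continuous μ) (hI : ∀ x, μ (I • x) = μ x)
    (hnonneg : ∀ x, 0 ≤ μ x) : ∃ B : E →L⋆[ℂ] E →L[ℂ] ℂ, ∀ x y, B x y = sesqForm μ x y := by
  obtain ⟨c, hc0, hμc⟩ := h.exists_le_mul_norm_sq hc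
  have hsqrt : ∀ x, √(μ x) ≤ c * ‖x‖ := fun x =>
    Real.sqrt_le_iff.mpr ⟨by positivity, hμc x⟩
  have hbound : ∀ x y, ‖sesqForm μ x y‖ ≤ c ^ 2 * ‖x‖ * ‖y‖ := fun x y =>
    calc ‖sesqForm μ x y‖ ≤ √(μ x) * √(μ y) := h.norm_sesqForm_le hc hI hnonneg x y
      _ ≤ (c * ‖x‖) * (c * ‖y‖) :=
        mul_le_mul (hsqrt x) (hsqrt y) (Real.sqrt_nonneg _) (by positivity)
      _ = c ^ 2 * ‖x‖ * ‖y‖ := by ring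
  let B : E →ₗ⋆[ℂ] E →ₗ[ℂ] ℂ :=
    LinearMap.mk₂'ₛₗ (starRingEnd ℂ) (RingHom.id ℂ) (sesqForm μ) (h.sesqForm_add_left hI)
      (h.sesqForm_smul_left hc hI) h.sesqForm_add_right
      (fun c x y => h.sesqForm_smul_right hc x c y)
  exact ⟨B.mkContinuous₂ (c ^ 2) hbound, fun _ _ => rfl⟩

end ParallelogramLaw

theorem stmt18_general {K : Type*} [NormedAddCommGroup K] [InnerProductSpace ℂ K] [CompleteSpace K]
    (μ : K → ℝ) (hcont : Continuous μ) (hnonneg : ∀ ξ : K, 0 ≤ μ ξ)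
    (hpar : ∀ ξ η : K, μ (ξ + η) + μ (ξ - η) = 2 * μ ξ + 2 * μ η)
    (hi : ∀ ξ : K, μ (Complex.I • ξ) = μ ξ) :
    ∃ M : K →L[ℂ] K, (∀ ξ : K, 0 ≤ (inner ℂ ξ (M ξ) : ℂ).re ∧ (inner ℂ ξ (M ξ) : ℂ).im = 0) ∧
      ∀ ξ : K, (inner ℂ ξ (M ξ) : ℂ) = (μ ξ : ℂ) := by
  have h : ParallelogramLaw μ := hpar
  obtain ⟨B, hB⟩ := h.exists_continuous_sesqForm hcont hi hnonneg
  let M := InnerProductSpace.continuousLinearMapOfBilin B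
  have hM : ∀ ξ, inner ℂ ξ (M ξ) = (μ ξ : ℂ) := fun ξ => by
    rw [← inner_conj_symm, InnerProductSpace.continuousLinearMapOfBilin_apply, hB,
      h.sesqForm_self hi, conj_ofReal]
  exact ⟨M, fun ξ => by simp [hM, hnonneg], hM⟩

theorem stmt18 {K : Type*} [NormedAddCommGroup K] [InnerProductSpace ℂ K] [CompleteSpace K]
    (μ : K → ℝ) (hcont : Continuous μ) (hnonneg : ∀ ξ : K, 0 ≤ μ ξ)
    (hpar : ∀ ξ η : K, μ (ξ + η) + μ (ξ - η) = 2 * μ ξ + 2 * μ η)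
    (hneg : ∀ ξ : K, μ (-ξ) = μ ξ)
    (hi : ∀ ξ : K, μ (Complex.I • ξ) = μ ξ) :
    ∃ M : K →L[ℂ] K, (∀ ξ : K, 0 ≤ (inner ℂ ξ (M ξ) : ℂ).re ∧ (inner ℂ ξ (M ξ) : ℂ).im = 0) ∧
      ∀ ξ : K, (inner ℂ ξ (M ξ) : ℂ) = (μ ξ : ℂ) :=
  stmt18_general μ hcont hnonneg hpar hi
end
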